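/- arXiv:0711.0557 — 3 statements merged into one kernel-verified Lean document; each statement's English description precedes it below -/
import Mathlib

section
/- The matrix D = (1/2)·diag(-j, 1, -j, -1)·(H₂ ⊗ H₂), where H₂ = [[1,1],[1,-1]], is unitary and satisfies D⁵ = I₄. -/
open Matrix Kronecker

def sylvesterH2 : Matrix (Fin 2) (Fin 2) ℂ := !![1, 1; 1, -1]

/-- The diagonal vector (-j, 1, -j, -1) indexed by `Fin 2 × Fin 2` in row-major
(Kronecker) order. -/
noncomputable def kerdockDiag4 : (Fin 2 × Fin 2) → ℂ :=
  fun p => !![-Complex.I, 1; -Complex.I, -1] p.1 p.2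

/-- The 4×4 Kerdock generator D = (1/2)·diag(-j,1,-j,-1)·(H₂⊗H₂). -/
noncomputable def kerdockD4 : Matrix (Fin 2 × Fin 2) (Fin 2 × Fin 2) ℂ :=
  (1 / 2 : ℂ) • (Matrix.diagonal kerdockDiag4 * (sylvesterH2 ⊗ₖ sylvesterH2))

/-!
Unitarity is structural: `D` is the product of the diagonal matrix of the unit scalars
`-j, 1, -j, -1` with `(1/2) (H₂ ⊗ H₂)`, which is unitary because `H₂ᴴ H₂ = 2`.
For the order, a direct computation of `D²` and then of `(D²)²` shows `D⁴ = Dᴴ`,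
so `D⁵ = Dᴴ D = 1`.
-/

namespace Matrix

theorem diagonal_mem_unitaryGroup {n α : Type*} [Fintype n] [DecidableEq n] [CommRing α]
    [StarRing α] {d : n → α} (hd : ∀ i, star (d i) * d i = 1) :
    diagonal d ∈ unitaryGroup n α := by
  rw [mem_unitaryGroup_iff', star_eq_conjTranspose, diagonal_conjTranspose, diagonal_mul_diagonal]
  simp only [Pi.star_apply, hd, diagonal_one]

end Matrix

theorem sylvesterH2_conjTranspose_mul_self : sylvesterH2ᴴ * sylvesterH2 = (2 : ℂ) • 1 := by
  ext i j
  fin_cases i <;> fin_cases j <;> norm_num [sylvesterH2, Matrix.mul_apply]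

theorem half_smul_kronecker_sylvesterH2_mem_unitaryGroup :
    (1 / 2 : ℂ) • (sylvesterH2 ⊗ₖ sylvesterH2) ∈ unitaryGroup (Fin 2 × Fin 2) ℂ := by
  rw [mem_unitaryGroup_iff', star_eq_conjTranspose, conjTranspose_smul, conjTranspose_kronecker,
    smul_mul_smul_comm, ← mul_kronecker_mul, sylvesterH2_conjTranspose_mul_self, smul_kronecker,
    kronecker_smul, one_kronecker_one, smul_smul, smul_smul]
  norm_num

theorem star_kerdockDiag4_mul_self (p : Fin 2 × Fin 2) :
    star (kerdockDiag4 p) * kerdockDiag4 p = 1 := by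
  obtain ⟨i, j⟩ := p
  fin_cases i <;> fin_cases j <;> simp [kerdockDiag4]

theorem kerdockD4_mem_unitaryGroup : kerdockD4 ∈ unitaryGroup (Fin 2 × Fin 2) ℂ := by
  rw [kerdockD4, ← mul_smul_comm]
  exact Submonoid.mul_mem _ (diagonal_mem_unitaryGroup star_kerdockDiag4_mul_self)
    half_smul_kronecker_sylvesterH2_mem_unitaryGroup

theorem kerdockD4_apply (p q : Fin 2 × Fin 2) :
    kerdockD4 p q =
      (1 / 2 : ℂ) * (kerdockDiag4 p * (sylvesterH2 p.1 q.1 * sylvesterH2 p.2 q.2)) := by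
  simp [kerdockD4, diagonal_mul, kroneckerMap_apply]

/-- `finProdFinEquiv` lists `Fin 2 × Fin 2` in the row-major order `(i, j) ↦ 2 i + j`. -/
theorem kerdockD4_sq : kerdockD4 ^ 2 = (1 / 2 : ℂ) •
    (!![-1, -1, -Complex.I, Complex.I;
        -Complex.I, -Complex.I, -1, 1;
        -Complex.I, Complex.I, -1, -1;
        1, -1, Complex.I, Complex.I] : Matrix (Fin 4) (Fin 4) ℂ).submatrix
      finProdFinEquiv finProdFinEquiv := by
  ext ⟨i, j⟩ ⟨k, l⟩
  rw [sq, mul_apply]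
  simp only [kerdockD4_apply, Fintype.sum_prod_type, Fin.sum_univ_two]
  fin_cases i <;> fin_cases j <;> fin_cases k <;> fin_cases l <;>
    simp [sylvesterH2, kerdockDiag4, finProdFinEquiv, Complex.ext_iff] <;> ring

theorem kerdockD4_pow_four : kerdockD4 ^ 4 = kerdockD4ᴴ := by
  ext ⟨i, j⟩ ⟨k, l⟩
  rw [show 4 = 2 * 2 from rfl, pow_mul, kerdockD4_sq, sq, mul_apply, conjTranspose_apply,
    kerdockD4_apply]
  simp only [Fintype.sum_prod_type, Fin.sum_univ_two]
  fin_cases i <;> fin_cases j <;> fin_cases k <;> fin_cases l <;>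
    simp [sylvesterH2, kerdockDiag4, finProdFinEquiv, Complex.ext_iff] <;> ring

/-- D = (1/2)·diag(-j,1,-j,-1)·(H₂⊗H₂) is unitary and satisfies D⁵ = I₄. -/
theorem kerdock_four_antenna_generator :
    kerdockD4 ∈ Matrix.unitaryGroup (Fin 2 × Fin 2) ℂ ∧ kerdockD4 ^ 5 = 1 := by
  refine ⟨kerdockD4_mem_unitaryGroup, ?_⟩
  rw [pow_succ, kerdockD4_pow_four, ← star_eq_conjTranspose]
  exact kerdockD4_mem_unitaryGroup.1
end

section
/- Let F₁ and F₂ be 4×3 matrices each obtained by selecting 3 distinct columns from (possibly different) members of a set of pairwise mutually unbiased 4×4 unitary bases {D, D², D³, D⁴} all of whose entries lie in {±1/2, ±j/2}, with F₁, F₂ coming from distinct bases. Then |det(F₁* F₂)| = 1/2. -/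
/-!
`F₁ᴴ F₂` is a `3 × 3` submatrix of `(D ^ p)ᴴ D ^ q = D ^ r` with `r ≡ q - p ≢ 0 (mod 5)`.
A `3 × 3` minor of a unitary `4 × 4` matrix `U` is, up to a sign, `det U` times the conjugate
of the complementary entry, because `adjugate U = det U • Uᴴ`; since `|det U| = 1` and every
entry of `D ^ r` has modulus `1 / 2`, the minor has modulus `1 / 2`.
-/

open Matrix

theorem Function.Injective.exists_eq_succAbove_comp_perm {n : ℕ} {c : Fin n → Fin (n + 1)}
    (hc : Function.Injective c) :
    ∃ (k : Fin (n + 1)) (σ : Equiv.Perm (Fin n)), c = k.succAbove ∘ σ := by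
  obtain ⟨k, hk⟩ : ∃ k, k ∉ Set.range c := by
    by_contra! h
    simpa using Fintype.card_le_of_surjective c fun k => h k
  have hmem : ∀ i, c i ∈ Set.range k.succAbove := fun i => by
    rw [Fin.range_succAbove]
    exact fun h => hk ⟨i, h⟩
  choose f hf using hmem
  have hf_inj : Function.Injective f := fun a b hab => hc (by rw [← hf a, ← hf b, hab])
  exact ⟨k, Equiv.ofBijective f (Finite.injective_iff_bijective.mp hf_inj),
    funext fun i => (hf i).symm⟩

theorem star_eq_pow_of_mem_unitary_of_pow_succ_eq_one {M : Type*} [Monoid M] [StarMul M]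
    {u : M} (hu : u ∈ unitary M) {m : ℕ} (h : u ^ (m + 1) = 1) : star u = u ^ m :=
  calc star u = star u * u ^ (m + 1) := by rw [h, mul_one]
    _ = u ^ m := by rw [pow_succ', ← mul_assoc, Unitary.star_mul_self_of_mem hu, one_mul]

namespace Matrix

theorem adjugate_eq_det_smul_conjTranspose {m R : Type*} [Fintype m] [DecidableEq m]
    [CommRing R] [StarRing R] {U : Matrix m m R} (hU : U ∈ unitaryGroup m R) :
    adjugate U = U.det • Uᴴ :=
  calc adjugate U = adjugate U * (U * Uᴴ) := by
        rw [← star_eq_conjTranspose, Unitary.mul_star_self_of_mem hU, mul_one]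
    _ = U.det • Uᴴ := by rw [← mul_assoc, adjugate_mul, smul_mul, one_mul]

variable {𝕜 : Type*} [RCLike 𝕜] {n : ℕ}

theorem norm_det_submatrix_perm (A : Matrix (Fin n) (Fin n) 𝕜) (σ τ : Equiv.Perm (Fin n)) :
    ‖(A.submatrix σ τ).det‖ = ‖A.det‖ := by
  have hsign : ∀ π : Equiv.Perm (Fin n), ‖((Equiv.Perm.sign π : ℤ) : 𝕜)‖ = 1 := fun π => by
    rcases Int.units_eq_one_or (Equiv.Perm.sign π) with h | h <;> simp [h]
  rw [show A.submatrix σ τ = (A.submatrix σ id).submatrix id τ from rfl, det_permute',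
    det_permute, norm_mul, norm_mul, hsign, hsign, one_mul, one_mul]

theorem norm_det_submatrix_succAbove_of_mem_unitaryGroup
    {U : Matrix (Fin (n + 1)) (Fin (n + 1)) 𝕜} (hU : U ∈ unitaryGroup (Fin (n + 1)) 𝕜)
    (i j : Fin (n + 1)) :
    ‖(U.submatrix i.succAbove j.succAbove).det‖ = ‖U i j‖ := by
  have hminor : ‖adjugate U j i‖ = ‖(U.submatrix i.succAbove j.succAbove).det‖ := by
    simp [adjugate_fin_succ_eq_det_submatrix]
  have hdet : ‖U.det‖ = 1 := CStarRing.norm_of_mem_unitary (det_of_mem_unitary hU)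
  rw [← hminor, adjugate_eq_det_smul_conjTranspose hU, smul_apply, conjTranspose_apply,
    smul_eq_mul, norm_mul, hdet, one_mul, norm_star]

theorem exists_norm_det_submatrix_eq_norm_apply
    {U : Matrix (Fin (n + 1)) (Fin (n + 1)) 𝕜} (hU : U ∈ unitaryGroup (Fin (n + 1)) 𝕜)
    {c₁ c₂ : Fin n → Fin (n + 1)} (hc₁ : Function.Injective c₁) (hc₂ : Function.Injective c₂) :
    ∃ i j, ‖(U.submatrix c₁ c₂).det‖ = ‖U i j‖ := by
  obtain ⟨i, σ, rfl⟩ := hc₁.exists_eq_succAbove_comp_perm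
  obtain ⟨j, τ, rfl⟩ := hc₂.exists_eq_succAbove_comp_perm
  refine ⟨i, j, ?_⟩
  rw [← norm_det_submatrix_succAbove_of_mem_unitaryGroup hU i j,
    ← norm_det_submatrix_perm (U.submatrix i.succAbove j.succAbove) σ τ]
  rfl

end Matrix

theorem kerdock_three_stream_determinant_general (D : Matrix (Fin 4) (Fin 4) ℂ)
    (hU : D ∈ Matrix.unitaryGroup (Fin 4) ℂ) (h5 : D ^ 5 = 1)
    (halpha : ∀ n : ℕ, 1 ≤ n → n ≤ 4 → ∀ i j : Fin 4,
      (D ^ n) i j ∈ ({1 / 2, -(1 / 2), Complex.I / 2, -(Complex.I / 2)} : Set ℂ))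
    (p q : ℕ) (hp4 : p ≤ 4) (hq4 : q ≤ 4) (hpq : p ≠ q)
    (c₁ c₂ : Fin 3 → Fin 4) (hc₁ : Function.Injective c₁) (hc₂ : Function.Injective c₂)
    (F₁ F₂ : Matrix (Fin 4) (Fin 3) ℂ)
    (hF₁ : F₁ = (D ^ p).submatrix id c₁) (hF₂ : F₂ = (D ^ q).submatrix id c₂) :
    ‖(F₁ᴴ * F₂).det‖ = 1 / 2 := by
  subst hF₁ hF₂
  have hstar : Dᴴ = D ^ 4 := star_eq_pow_of_mem_unitary_of_pow_succ_eq_one hU h5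
  set r := (4 * p + q) % 5
  have hr_pos : 1 ≤ r := by omega
  have hprod : (D ^ p)ᴴ * D ^ q = D ^ r := by
    rw [conjTranspose_pow, hstar, ← pow_mul, ← pow_add, ← pow_eq_pow_mod _ h5]
  have hsub : ((D ^ p).submatrix id c₁)ᴴ * (D ^ q).submatrix id c₂ = (D ^ r).submatrix c₁ c₂ := by
    rw [conjTranspose_submatrix, ← submatrix_mul _ _ _ _ _ Function.bijective_id, hprod]
  obtain ⟨i, j, hij⟩ := exists_norm_det_submatrix_eq_norm_apply (pow_mem hU r) hc₁ hc₂
  rw [hsub, hij]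
  have hentry := halpha r hr_pos (by omega) i j
  simp only [Set.mem_insert_iff, Set.mem_singleton_iff] at hentry
  rcases hentry with h | h | h | h <;> simp [h]

/-- Three-column precoders from distinct non-identity powers of the 4×4 Kerdock
generator satisfy |det(F₁* F₂)| = 1/2. -/
theorem kerdock_three_stream_determinant (D : Matrix (Fin 4) (Fin 4) ℂ)
    (hU : D ∈ Matrix.unitaryGroup (Fin 4) ℂ) (h5 : D ^ 5 = 1)
    (halpha : ∀ n : ℕ, 1 ≤ n → n ≤ 4 → ∀ i j : Fin 4,
      (D ^ n) i j ∈ ({1 / 2, -(1 / 2), Complex.I / 2, -(Complex.I / 2)} : Set ℂ))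
    (p q : ℕ) (hp1 : 1 ≤ p) (hp4 : p ≤ 4) (hq1 : 1 ≤ q) (hq4 : q ≤ 4) (hpq : p ≠ q)
    (c₁ c₂ : Fin 3 → Fin 4) (hc₁ : Function.Injective c₁) (hc₂ : Function.Injective c₂)
    (F₁ F₂ : Matrix (Fin 4) (Fin 3) ℂ)
    (hF₁ : F₁ = (D ^ p).submatrix id c₁) (hF₂ : F₂ = (D ^ q).submatrix id c₂) :
    ‖(F₁ᴴ * F₂).det‖ = 1 / 2 :=
  kerdock_three_stream_determinant_general D hU h5 halpha p q hp4 hq4 hpq c₁ c₂ hc₁ hc₂ F₁ F₂ hF₁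
    hF₂
end

section
/- For any N unit vectors f₁,...,f_N in C^{M} with N ≥ M, the minimum pairwise chordal distance satisfies min_{k≠l} √(1 − |f_k* f_l|²) ≤ √(N(M−1)/(M(N−1))) (Rankin bound for complex line packings). -/
/-!
Let `a k l = |⟨f_k, f_l⟩|²`. The Welch bound `∑ₖₗ a k l ≥ N² / M` holds because the Gram matrix
`FᴴF` and the frame operator `FFᴴ` have the same Frobenius norm, which dominates the sum of squares
of the diagonal of `FFᴴ`; by Cauchy–Schwarz that is at least `(tr FFᴴ)² / M = N² / M`. The
diagonal terms `a k k` contribute exactly `N`, so the largest off-diagonal `a k l` is at least the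
average `(N² / M - N) / (N (N - 1))`, which is the bound `1 - a k l ≤ N (M - 1) / (M (N - 1))`.
-/

open Finset Matrix

namespace Finset

variable {ι M : Type*} [AddCommMonoid M]

theorem exists_sum_le_card_nsmul [LinearOrder M] [IsOrderedCancelAddMonoid M] {s : Finset ι}
    (hs : s.Nonempty) (f : ι → M) : ∃ i ∈ s, ∑ j ∈ s, f j ≤ #s • f i :=
  exists_le_of_sum_le hs (by rw [sum_const, sum_nsmul])

theorem sum_product_self_eq_sum_add_sum_offDiag [DecidableEq ι] (s : Finset ι)
    (f : ι × ι → M) : ∑ p ∈ s ×ˢ s, f p = ∑ i ∈ s, f (i, i) + ∑ p ∈ s.offDiag, f p := by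
  rw [← diag_union_offDiag, sum_union (disjoint_diag_offDiag s), diag, sum_map]
  rfl

end Finset

theorem exists_ne_sum_sub_sum_diag_le {ι : Type*} [Fintype ι] (h : 1 < Fintype.card ι)
    (a : ι → ι → ℝ) :
    ∃ k l, k ≠ l ∧ ∑ k, ∑ l, a k l - ∑ k, a k k ≤
      Fintype.card ι * (Fintype.card ι - 1) * a k l := by
  classical
  obtain ⟨i, j, hij⟩ := Fintype.exists_pair_of_one_lt_card h
  have hne : (univ : Finset ι).offDiag.Nonempty := ⟨(i, j), by simpa using hij⟩
  obtain ⟨⟨k, l⟩, hkl, hle⟩ := exists_sum_le_card_nsmul hne (fun p => a p.1 p.2)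
  refine ⟨k, l, (mem_offDiag.1 hkl).2.2, ?_⟩
  have hcard : (#(univ : Finset ι).offDiag : ℝ) = Fintype.card ι * (Fintype.card ι - 1) := by
    rw [offDiag_card, card_univ, Nat.cast_sub (Nat.le_mul_self _)]
    push_cast
    ring
  rw [← sum_product' (f := a), sum_product_self_eq_sum_add_sum_offDiag, ← hcard, ← nsmul_eq_mul]
  simpa using hle

namespace Matrix

variable {m n 𝕜 : Type*} [Fintype n] [RCLike 𝕜]

theorem mul_conjTranspose_self_apply_self (F : Matrix m n 𝕜) (i : m) :
    (F * Fᴴ) i i = ((∑ k, ‖F i k‖ ^ 2 : ℝ) : 𝕜) := by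
  simp [mul_apply, RCLike.mul_conj]

variable [Fintype m]

theorem ofReal_sum_norm_sq_eq_trace_mul_conjTranspose (A : Matrix m n 𝕜) :
    ((∑ i, ∑ j, ‖A i j‖ ^ 2 : ℝ) : 𝕜) = (A * Aᴴ).trace := by
  simp [trace, mul_apply, RCLike.mul_conj]

theorem sum_norm_sq_conjTranspose_mul_self_eq (F : Matrix m n 𝕜) :
    ∑ k, ∑ l, ‖(Fᴴ * F) k l‖ ^ 2 = ∑ i, ∑ j, ‖(F * Fᴴ) i j‖ ^ 2 := by
  apply RCLike.ofReal_injective (K := 𝕜)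
  simp only [ofReal_sum_norm_sq_eq_trace_mul_conjTranspose, conjTranspose_mul,
    conjTranspose_conjTranspose, ← Matrix.mul_assoc]
  rw [trace_mul_comm, Matrix.mul_assoc, Matrix.mul_assoc, Matrix.mul_assoc]

theorem welch_bound (F : Matrix m n 𝕜) :
    (∑ k, ∑ i, ‖F i k‖ ^ 2) ^ 2 ≤ Fintype.card m * ∑ k, ∑ l, ‖(Fᴴ * F) k l‖ ^ 2 := by
  set r : m → ℝ := fun i => ∑ k, ‖F i k‖ ^ 2
  have hdiag : ∀ i, r i ^ 2 ≤ ∑ j, ‖(F * Fᴴ) i j‖ ^ 2 := fun i => by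
    have : ‖(F * Fᴴ) i i‖ = r i := by
      rw [mul_conjTranspose_self_apply_self, RCLike.norm_ofReal, abs_of_nonneg (by positivity)]
    rw [← this]
    exact single_le_sum (f := fun j => ‖(F * Fᴴ) i j‖ ^ 2) (fun _ _ => by positivity)
      (mem_univ i)
  calc (∑ k, ∑ i, ‖F i k‖ ^ 2) ^ 2 = (∑ i, r i) ^ 2 := by rw [sum_comm]
    _ ≤ Fintype.card m * ∑ i, r i ^ 2 := by
      simpa using sq_sum_le_card_mul_sum_sq (s := univ) (f := r)
    _ ≤ Fintype.card m * ∑ k, ∑ l, ‖(Fᴴ * F) k l‖ ^ 2 := by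
      rw [sum_norm_sq_conjTranspose_mul_self_eq]
      gcongr with i
      exact hdiag i

end Matrix

theorem rankin_bound_lines_general (N M : ℕ) (hN : 1 < N)
    (f : Fin N → Fin M → ℂ)
    (hf : ∀ k, ∑ i, ‖f k i‖ ^ 2 = 1) :
    ∃ k l : Fin N, k ≠ l ∧
      Real.sqrt (1 - ‖∑ i, (starRingEnd ℂ) (f k i) * f l i‖ ^ 2)
        ≤ Real.sqrt ((N : ℝ) * ((M : ℝ) - 1) / ((M : ℝ) * ((N : ℝ) - 1))) := by
  set a : Fin N → Fin N → ℝ := fun k l => ‖∑ i, (starRingEnd ℂ) (f k i) * f l i‖ ^ 2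
  have hdiag : ∀ k, a k k = 1 := fun k => by
    simp only [a, RCLike.conj_mul]
    norm_cast
    simp [hf k]
  have hwelch : (N : ℝ) ^ 2 ≤ M * ∑ k, ∑ l, a k l := by
    have := welch_bound (Matrix.of f)ᵀ
    simp only [transpose_apply, of_apply, hf, sum_const, card_univ, Fintype.card_fin,
      nsmul_eq_mul, mul_one] at this
    exact this
  obtain ⟨k, l, hkl, hoff⟩ := exists_ne_sum_sub_sum_diag_le (by simpa using hN) a
  refine ⟨k, l, hkl, Real.sqrt_le_sqrt ?_⟩
  simp only [hdiag, sum_const, card_univ, Fintype.card_fin, nsmul_eq_mul, mul_one] at hoff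
  have hN' : (1 : ℝ) < N := by exact_mod_cast hN
  have hM : (0 : ℝ) < M := Nat.cast_pos.2 (Nat.pos_of_ne_zero fun h => by
    simp [h] at hwelch
    omega)
  rw [le_div_iff₀ (by positivity)]
  nlinarith

/-- Rankin bound for complex line packings: among any N ≥ M unit vectors in ℂ^M,
some pair has chordal distance at most √(N(M−1)/(M(N−1))). -/
theorem rankin_bound_lines (N M : ℕ) (hN : 1 < N) (hM : 0 < M) (hMN : M ≤ N)
    (f : Fin N → Fin M → ℂ)
    (hf : ∀ k, ∑ i, ‖f k i‖ ^ 2 = 1) :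
    ∃ k l : Fin N, k ≠ l ∧
      Real.sqrt (1 - ‖∑ i, (starRingEnd ℂ) (f k i) * f l i‖ ^ 2)
        ≤ Real.sqrt ((N : ℝ) * ((M : ℝ) - 1) / ((M : ℝ) * ((N : ℝ) - 1))) :=
  rankin_bound_lines_general N M hN f hf
end
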